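/- arXiv:1210.0527 — 4 statements merged into one kernel-verified Lean document; each statement's English description precedes it below -/
import Mathlib

section
/- Let E be a real inner product space, let G : E → ℝ be a Lipschitz function with Lipschitz constant C > 0, let α : I → E be a curve defined on an open interval I, and let s₀ ∈ I. Assume that α is differentiable at s₀, that the function ρ = G ∘ α is differentiable at s₀, and that there exists a nonzero vector η ∈ E with ⟪η, α′(s₀)⟫ = 0 and |G(α(s₀)) − G(α(s₀) + η)| = C‖η‖. Then ρ′(s₀) = 0. (This is Claim 3.1, the key step in the proof of Theorem 1.3, in the Euclidean/inner-product setting.) -/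
/-! With `p = α s₀ + η`, the Lipschitz bound gives `|ρ s - G p| ≤ C‖α s - p‖` for all `s`, with
equality at `s₀`. Since `α s₀ - p = -η ⊥ α'(s₀)`, the dominating function is stationary at `s₀`,
and comparing derivatives at this point of contact forces `ρ'(s₀) = 0`. -/

open scoped RealInnerProductSpace
open Filter Topology

theorem HasDerivAt.norm {F : Type*} [NormedAddCommGroup F] [InnerProductSpace ℝ F]
    {u : ℝ → F} {u' : F} {x : ℝ} (hu : HasDerivAt u u' x) (hx : u x ≠ 0) :
    HasDerivAt (fun s => ‖u s‖) (⟪u x, u'⟫ / ‖u x‖) x := by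
  obtain ⟨d, hnorm⟩ : ∃ d, HasDerivAt (fun s => ‖u s‖) d x :=
    ⟨_, (hu.differentiableAt.norm ℝ hx).hasDerivAt⟩
  have hsq : 2 * ‖u x‖ * d = 2 * ⟪u x, u'⟫ := by
    simpa using (hnorm.fun_pow 2).unique hu.norm_sq
  refine hnorm.congr_deriv ?_
  have : ‖u x‖ ≠ 0 := norm_ne_zero_iff.mpr hx
  field_simp
  linarith

/-- `±f - g` has a local maximum at `x`. -/
theorem eq_or_eq_neg_of_abs_le_of_abs_eq {f g : ℝ → ℝ} {f' g' x : ℝ}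
    (hf : HasDerivAt f f' x) (hg : HasDerivAt g g' x)
    (hle : ∀ᶠ y in 𝓝 x, |f y| ≤ g y) (heq : |f x| = g x) :
    f' = g' ∨ f' = -g' := by
  rcases abs_eq ((abs_nonneg _).trans_eq heq) |>.mp heq with hx | hx
  · have hmax : IsLocalMax (fun y => f y - g y) x :=
      hle.mono fun y hy => by simp only [hx, sub_self]; linarith [(abs_le.mp hy).2]
    left
    linarith [hmax.hasDerivAt_eq_zero (hf.sub hg)]
  · have hmax : IsLocalMax (fun y => -f y - g y) x :=
      hle.mono fun y hy => by simp only [hx, neg_neg, sub_self]; linarith [(abs_le.mp hy).1]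
    right
    linarith [hmax.hasDerivAt_eq_zero (hf.neg.sub hg)]

theorem stmt_4_general
    {E : Type*} [NormedAddCommGroup E] [InnerProductSpace ℝ E]
    (G : E → ℝ) (C : ℝ)
    (hLip : ∀ x y : E, |G x - G y| ≤ C * ‖x - y‖)
    (s₀ : ℝ)
    (α : ℝ → E) (α' : E) (hα : HasDerivAt α α' s₀)
    (ρ' : ℝ) (hρ : HasDerivAt (fun s => G (α s)) ρ' s₀)
    (η : E) (hη : η ≠ 0) (horth : ⟪η, α'⟫ = 0)
    (heq : |G (α s₀) - G (α s₀ + η)| = C * ‖η‖) :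
    ρ' = 0 := by
  set p := α s₀ + η
  have hαp : α s₀ - p = -η := by simp [p]
  have hdist : HasDerivAt (fun s => C * ‖α s - p‖) 0 s₀ := by
    have := ((hα.sub_const p).norm (by simpa [hαp] using hη)).const_mul C
    simpa [hαp, horth] using this
  have heq' : |G (α s₀) - G p| = C * ‖α s₀ - p‖ := by rw [hαp, norm_neg, heq]
  simpa using eq_or_eq_neg_of_abs_le_of_abs_eq (hρ.sub_const (G p)) hdist
    (.of_forall fun s => hLip (α s) p) heq'

/-- Claim 3.1 of the paper (key step in the proof of Theorem 1.3), in the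
Euclidean/inner-product setting: if `G` is `C`-Lipschitz, `α` is a curve on an open
interval differentiable at `s₀`, `ρ = G ∘ α` is differentiable at `s₀`, and there is a
nonzero `η` orthogonal to `α'(s₀)` with `|G(α s₀) - G(α s₀ + η)| = C‖η‖`, then
`ρ'(s₀) = 0`. -/
theorem stmt_4
    {E : Type*} [NormedAddCommGroup E] [InnerProductSpace ℝ E]
    (G : E → ℝ) (C : ℝ) (hC : 0 < C)
    (hLip : ∀ x y : E, |G x - G y| ≤ C * ‖x - y‖)
    (a b s₀ : ℝ) (hs₀ : s₀ ∈ Set.Ioo a b)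
    (α : ℝ → E) (α' : E) (hα : HasDerivAt α α' s₀)
    (ρ' : ℝ) (hρ : HasDerivAt (fun s => G (α s)) ρ' s₀)
    (η : E) (hη : η ≠ 0) (horth : ⟪η, α'⟫ = 0)
    (heq : |G (α s₀) - G (α s₀ + η)| = C * ‖η‖) :
    ρ' = 0 :=
  stmt_4_general G C hLip s₀ α α' hα ρ' hρ η hη horth heq
end

section
/- Let E = ℝⁿ (Euclidean space of dimension n), let Σ be a differentiable manifold of dimension n − 1, and let f : Σ → E be a differentiable immersion (a hypersurface). Let W ⊆ E be a nonempty proper affine subspace with direction D and nearest-point projection π_W, and assume f(Σ) ∩ W = ∅. Assume property (C): for every q ∈ Σ and every tangent vector v in the image of df_q that is orthogonal to D, there exists η ∈ E with ⟪η, v⟫ = 0 such that the line {f(q) + tη : t ∈ ℝ} intersects W. Then π_W ∘ f is a submersion: for every q ∈ Σ, the orthogonal projection onto D maps the image of df_q onto all of D. (This is Proposition 2.8 of the paper in the Euclidean case c = 0.) -/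
/-! If the projection onto `D` of the tangent hyperplane `T = im df_q` missed part of `D`, some
nonzero `d ∈ D` would be orthogonal to `T`, forcing `T = d^⊥ ⊇ Dᗮ`. Then the normal vector
`u = f q - π_W (f q)` is tangent and orthogonal to `D`, so (C) gives a line through `f q`
perpendicular to `u` that meets `W`; as `u ⊥ D`, this forces `‖u‖² = 0`, i.e. `f q ∈ W`. -/

open scoped Manifold RealInnerProductSpace

open Module

namespace Submodule

variable {𝕜 E : Type*} [RCLike 𝕜] [NormedAddCommGroup E] [InnerProductSpace 𝕜 E]
  [FiniteDimensional 𝕜 E]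

theorem eq_orthogonal_span_singleton_of_le {T : Submodule 𝕜 E} {d : E} (hd : d ≠ 0)
    (hle : T ≤ (𝕜 ∙ d)ᗮ) (hT : finrank 𝕜 E ≤ finrank 𝕜 T + 1) : T = (𝕜 ∙ d)ᗮ := by
  refine eq_of_le_of_finrank_le hle ?_
  have := finrank_add_finrank_orthogonal (𝕜 ∙ d)
  rw [finrank_span_singleton hd] at this
  omega

theorem map_orthogonalProjectionOnto_eq_top {K T : Submodule 𝕜 E}
    (hT : finrank 𝕜 E ≤ finrank 𝕜 T + 1) (hKT : ¬ Kᗮ ≤ T) :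
    T.map (K.orthogonalProjectionOnto : E →ₗ[𝕜] K) = ⊤ := by
  by_contra hne
  obtain ⟨d, hd, hd0⟩ := (Submodule.ne_bot_iff _).mp
    (mt (orthogonal_eq_bot_iff (K := T.map (K.orthogonalProjectionOnto : E →ₗ[𝕜] K))).mp hne)
  have hdT : T ≤ (𝕜 ∙ (d : E))ᗮ := fun x hx => by
    rw [mem_orthogonal_singleton_iff_inner_left, ← inner_orthogonalProjectionOnto_eq_of_mem_right]
    exact hd _ (mem_map_of_mem hx)
  rw [eq_orthogonal_span_singleton_of_le (by simpa using hd0) hdT hT] at hKT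
  exact hKT (orthogonal_le (span_singleton_le_iff_mem _ _ |>.mpr d.2))

end Submodule

namespace EuclideanGeometry

variable {V : Type*} [NormedAddCommGroup V] [InnerProductSpace ℝ V]

theorem mem_of_add_smul_mem_of_inner_sub_orthogonalProjection_eq_zero
    {s : AffineSubspace ℝ V} [Nonempty s] [s.direction.HasOrthogonalProjection] {p η : V}
    (hη : ⟪η, p - orthogonalProjection s p⟫ = 0) {t : ℝ} (ht : p + t • η ∈ s) : p ∈ s := by
  set u := p - (orthogonalProjection s p : V)
  have hu : u ∈ s.directionᗮ := vsub_orthogonalProjection_mem_direction_orthogonal s p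
  have hdir : p + t • η - orthogonalProjection s p ∈ s.direction :=
    AffineSubspace.vsub_mem_direction ht (orthogonalProjection_mem p)
  have hu0 : u = 0 := by
    have h := Submodule.inner_right_of_mem_orthogonal hdir hu
    rw [show p + t • η - orthogonalProjection s p = t • η + u by simp only [u]; abel,
      inner_add_left, real_inner_smul_left, hη, mul_zero, zero_add] at h
    exact inner_self_eq_zero.mp h
  rw [sub_eq_zero.mp hu0]
  exact orthogonalProjection_mem p

end EuclideanGeometry

open EuclideanGeometry in
theorem stmt_8_general {n : ℕ}
    {M : Type*} [TopologicalSpace M]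
    [ChartedSpace (EuclideanSpace ℝ (Fin (n - 1))) M]
    (f : M → EuclideanSpace ℝ (Fin n))
    (himm : ∀ q : M, Function.Injective (mfderiv (𝓡 (n - 1)) (𝓡 n) f q))
    (W : AffineSubspace ℝ (EuclideanSpace ℝ (Fin n)))
    (hWne : (W : Set (EuclideanSpace ℝ (Fin n))).Nonempty)
    (hdisj : ∀ q : M, f q ∉ W)
    (hC : ∀ (q : M) (v : EuclideanSpace ℝ (Fin n)),
      (∃ w : TangentSpace (𝓡 (n - 1)) q, (mfderiv (𝓡 (n - 1)) (𝓡 n) f q w : EuclideanSpace ℝ (Fin n)) = v) →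
      (∀ d ∈ W.direction, ⟪v, d⟫ = 0) →
      ∃ η : EuclideanSpace ℝ (Fin n), ⟪η, v⟫ = 0 ∧ ∃ t : ℝ, f q + t • η ∈ W) :
    ∀ (q : M) (d : W.direction), ∃ v : TangentSpace (𝓡 (n - 1)) q,
      Submodule.orthogonalProjection W.direction
        (mfderiv (𝓡 (n - 1)) (𝓡 n) f q v : EuclideanSpace ℝ (Fin n)) = d := by
  intro q d
  have : Nonempty W := hWne.to_subtype
  set T := LinearMap.range (mfderiv (𝓡 (n - 1)) (𝓡 n) f q).toLinearMap
  have hT : finrank ℝ (EuclideanSpace ℝ (Fin n)) ≤ finrank ℝ T + 1 := by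
    rw [LinearMap.finrank_range_of_inj (himm q)]
    change _ ≤ finrank ℝ (EuclideanSpace ℝ (Fin (n - 1))) + 1
    rw [finrank_euclideanSpace_fin, finrank_euclideanSpace_fin]
    omega
  have hWT : ¬ W.directionᗮ ≤ T := fun hle => by
    have hu := vsub_orthogonalProjection_mem_direction_orthogonal W (f q)
    obtain ⟨w, hw⟩ := hle hu
    obtain ⟨η, hη, t, ht⟩ := hC q _ ⟨w, hw⟩ ((Submodule.mem_orthogonal' _ _).mp hu)
    exact hdisj q (mem_of_add_smul_mem_of_inner_sub_orthogonalProjection_eq_zero hη ht)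
  obtain ⟨x, ⟨v, rfl⟩, hv⟩ := (Submodule.map_orthogonalProjectionOnto_eq_top hT hWT).ge
    (Submodule.mem_top (x := d))
  exact ⟨v, hv⟩

/-- Proposition 2.8 of the paper in the Euclidean case `c = 0`: for a hypersurface
`f : Σ^{n-1} → ℝⁿ` disjoint from a proper nonempty affine subspace `W`, property (C)
(every tangent vector orthogonal to the direction `D` of `W` admits an orthogonal
line through the foot point meeting `W`) implies that `π_W ∘ f` is a submersion, i.e.
the orthogonal projection onto `D` maps the image of `df_q` onto all of `D`. -/
theorem stmt_8 {n : ℕ}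
    {M : Type*} [TopologicalSpace M]
    [ChartedSpace (EuclideanSpace ℝ (Fin (n - 1))) M]
    (f : M → EuclideanSpace ℝ (Fin n))
    (hf : MDifferentiable (𝓡 (n - 1)) (𝓡 n) f)
    (himm : ∀ q : M, Function.Injective (mfderiv (𝓡 (n - 1)) (𝓡 n) f q))
    (W : AffineSubspace ℝ (EuclideanSpace ℝ (Fin n)))
    (hWne : (W : Set (EuclideanSpace ℝ (Fin n))).Nonempty) (hWproper : W ≠ ⊤)
    (hdisj : ∀ q : M, f q ∉ W)
    (hC : ∀ (q : M) (v : EuclideanSpace ℝ (Fin n)),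
      (∃ w : TangentSpace (𝓡 (n - 1)) q, (mfderiv (𝓡 (n - 1)) (𝓡 n) f q w : EuclideanSpace ℝ (Fin n)) = v) →
      (∀ d ∈ W.direction, ⟪v, d⟫ = 0) →
      ∃ η : EuclideanSpace ℝ (Fin n), ⟪η, v⟫ = 0 ∧ ∃ t : ℝ, f q + t • η ∈ W) :
    ∀ (q : M) (d : W.direction), ∃ v : TangentSpace (𝓡 (n - 1)) q,
      Submodule.orthogonalProjection W.direction
        (mfderiv (𝓡 (n - 1)) (𝓡 n) f q v : EuclideanSpace ℝ (Fin n)) = d :=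
  stmt_8_general f himm W hWne hdisj hC
end

section
/- Let E be a real inner product space, let Σ be a differentiable manifold, and let f : Σ → E be a differentiable immersion. Let W ⊆ E be a nonempty affine subspace whose direction D is a complete subspace, with nearest-point projection π_W, and assume f(Σ) ∩ W = ∅. Assume property (C): for every q ∈ Σ and every tangent vector v in the image of df_q that is orthogonal to D, there exists η ∈ E with ⟪η, v⟫ = 0 such that the line {f(q) + tη : t ∈ ℝ} intersects W. Then for every differentiable curve α : I → Σ (I an interval) such that π_W(f(α(t))) is constant in t, the distance function t ↦ dist(f(α(t)), W) = ‖f(α(t)) − π_W(f(α(t)))‖ is constant. (This is Claim 2.7 ("Claim constant") in the proof of Theorem 1.1, in the Euclidean case c = 0: the distance to W is constant along the fibers of π_W restricted to Σ.) -/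
open scoped Manifold RealInnerProductSpace

/-!
Let `g = f ∘ α` and `p` the common value of `π ∘ g`. Since `⟪g - p, d⟫ = 0` for every
`d ∈ D`, the velocity `v = g'` is orthogonal to `D`, and it lies in the image of `df`.
Property (C) then gives `η ⊥ v` with `g + t η ∈ W`, so
`g - p = (g + t η - p) - t η` is orthogonal to `v`: the derivative of `‖g - p‖²` vanishes.
-/

section

variable {E : Type*} [NormedAddCommGroup E] [InnerProductSpace ℝ E]

theorem Convex.eq_of_hasDerivWithinAt_eq_zero {F : Type*} [NormedAddCommGroup F]
    [NormedSpace ℝ F] {s : Set ℝ} {φ : ℝ → F} (hs : Convex ℝ s)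
    (hφ : ∀ x ∈ s, HasDerivWithinAt φ 0 s x) {x y : ℝ} (hx : x ∈ s) (hy : y ∈ s) :
    φ x = φ y := by
  have h := hs.norm_image_sub_le_of_norm_hasDerivWithin_le hφ (fun _ _ ↦ norm_zero.le) hx hy
  rw [zero_mul, norm_le_zero_iff, sub_eq_zero] at h
  exact h.symm

theorem Convex.norm_eq_of_inner_hasDerivWithinAt_eq_zero {s : Set ℝ} {g g' : ℝ → E}
    (hs : Convex ℝ s) (hg : ∀ x ∈ s, HasDerivWithinAt g (g' x) s x)
    (horth : ∀ x ∈ s, ⟪g x, g' x⟫ = 0) {x y : ℝ} (hx : x ∈ s) (hy : y ∈ s) :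
    ‖g x‖ = ‖g y‖ := by
  have hsq : ‖g x‖ ^ 2 = ‖g y‖ ^ 2 :=
    hs.eq_of_hasDerivWithinAt_eq_zero (φ := (‖g ·‖ ^ 2))
      (fun u hu ↦ by simpa [horth u hu] using (hg u hu).norm_sq) hx hy
  exact (sq_eq_sq₀ (norm_nonneg _) (norm_nonneg _)).1 hsq

theorem HasDerivWithinAt.inner_eq_zero_of_inner_const {s : Set ℝ} {g : ℝ → E} {g' d : E}
    {u c : ℝ} (hg : HasDerivWithinAt g g' s u) (hs : UniqueDiffWithinAt ℝ s u) (hu : u ∈ s) (hc : ∀ x ∈ s, ⟪g x, d⟫ = c) : ⟪g', d⟫ = 0 := by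
  have hconst : HasDerivWithinAt (fun x ↦ ⟪g x, d⟫) 0 s u :=
    (hasDerivWithinAt_const u s c).congr hc (hc u hu)
  simpa using hs.eq_deriv s (hg.inner ℝ (hasDerivWithinAt_const u s d)) hconst

theorem AffineSubspace.inner_sub_eq_zero_of_add_smul_mem {W : AffineSubspace ℝ E}
    {x p v η : E} {t : ℝ} (hv : ∀ d ∈ W.direction, ⟪v, d⟫ = 0) (hη : ⟪η, v⟫ = 0)
    (hx : x + t • η ∈ W) (hp : p ∈ W) : ⟪x - p, v⟫ = 0 := by
  have hdir : ⟪(x + t • η) - p, v⟫ = 0 := by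
    rw [real_inner_comm]
    exact hv _ (W.vsub_mem_direction hx hp)
  have hsplit : x - p = ((x + t • η) - p) - t • η := by abel
  rw [hsplit, inner_sub_left, hdir, real_inner_smul_left, hη, mul_zero, sub_zero]

theorem MDifferentiableAt.hasDerivWithinAt_comp
    {E' : Type*} [NormedAddCommGroup E'] [NormedSpace ℝ E']
    {H : Type*} [TopologicalSpace H] {I : ModelWithCorners ℝ E' H}
    {M : Type*} [TopologicalSpace M] [ChartedSpace H M]
    {F : Type*} [NormedAddCommGroup F] [NormedSpace ℝ F] {f : M → F} {α : ℝ → M} {s : Set ℝ}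
    {u : ℝ} (hf : MDifferentiableAt I 𝓘(ℝ, F) f (α u))
    (hα : MDifferentiableWithinAt 𝓘(ℝ, ℝ) I α s u) :
    HasDerivWithinAt (f ∘ α)
      (mfderiv I 𝓘(ℝ, F) f (α u) (mfderivWithin 𝓘(ℝ, ℝ) I α s u 1)) s u := by
  -- Restating `h` over `F` replaces the `TangentSpace` module instances by those of `F`.
  have h : HasFDerivWithinAt (𝕜 := ℝ) (F := F) (f ∘ α) _ s u :=
    hasMFDerivWithinAt_iff_hasFDerivWithinAt.1
      (hf.hasMFDerivAt.comp_hasMFDerivWithinAt u hα.hasMFDerivWithinAt)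
  exact h.hasDerivWithinAt

end

theorem stmt_9_general
    {E : Type*} [NormedAddCommGroup E] [InnerProductSpace ℝ E]
    {E' : Type*} [NormedAddCommGroup E'] [NormedSpace ℝ E']
    {H : Type*} [TopologicalSpace H] (I : ModelWithCorners ℝ E' H)
    {M : Type*} [TopologicalSpace M] [ChartedSpace H M]
    (f : M → E) (hf : MDifferentiable I 𝓘(ℝ, E) f)
    (W : AffineSubspace ℝ E)
    (π : E → E) (hπmem : ∀ x : E, π x ∈ W)
    (hπorth : ∀ x : E, ∀ d ∈ W.direction, ⟪x - π x, d⟫ = 0)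
    (hC : ∀ (q : M) (v : E),
      (∃ w : TangentSpace I q, (mfderiv I 𝓘(ℝ, E) f q w : E) = v) →
      (∀ d ∈ W.direction, ⟪v, d⟫ = 0) →
      ∃ η : E, ⟪η, v⟫ = 0 ∧ ∃ t : ℝ, f q + t • η ∈ W)
    (T : Set ℝ) (hT : T.OrdConnected)
    (α : ℝ → M) (hα : MDifferentiableOn 𝓘(ℝ, ℝ) I α T)
    (hfiber : ∀ s ∈ T, ∀ t ∈ T, π (f (α s)) = π (f (α t))) :
    ∀ s ∈ T, ∀ t ∈ T, ‖f (α s) - π (f (α s))‖ = ‖f (α t) - π (f (α t))‖ := by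
  intro s hs t ht
  rcases T.subsingleton_or_nontrivial with hsub | hnt
  · rw [hsub hs ht]
  have hconv : Convex ℝ T := hT.convex
  have huniq : UniqueDiffOn ℝ T :=
    uniqueDiffOn_convex hconv (hconv.nontrivial_iff_nonempty_interior.1 hnt)
  set p := π (f (α s))
  set v : ℝ → E := fun u ↦ mfderiv I 𝓘(ℝ, E) f (α u) (mfderivWithin 𝓘(ℝ, ℝ) I α T u 1)
  have hderiv : ∀ u ∈ T, HasDerivWithinAt (fun u ↦ f (α u)) (v u) T u :=
    fun u hu ↦ (hf (α u)).hasDerivWithinAt_comp (hα u hu)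
  have hvD : ∀ u ∈ T, ∀ d ∈ W.direction, ⟪v u, d⟫ = 0 := fun u hu d hd ↦
    ((hderiv u hu).sub_const p).inner_eq_zero_of_inner_const (huniq u hu) hu
      fun x hx ↦ by rw [show p = π (f (α x)) from hfiber s hs x hx]; exact hπorth _ d hd
  have hperp : ∀ u ∈ T, ⟪f (α u) - p, v u⟫ = 0 := fun u hu ↦ by
    obtain ⟨η, hη, r, hmem⟩ := hC (α u) (v u) ⟨_, rfl⟩ (hvD u hu)
    exact W.inner_sub_eq_zero_of_add_smul_mem (hvD u hu) hη hmem (hπmem _)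
  rw [hfiber t ht s hs]
  exact hconv.norm_eq_of_inner_hasDerivWithinAt_eq_zero
    (fun u hu ↦ (hderiv u hu).sub_const p) hperp hs ht

/-- Claim 2.7 ("Claim constant") in the proof of Theorem 1.1 of the paper, in the
Euclidean case `c = 0`: under property (C), the distance to `W` is constant along any
differentiable curve in `Σ` lying in a single fiber of `π_W ∘ f`. -/
theorem stmt_9
    {E : Type*} [NormedAddCommGroup E] [InnerProductSpace ℝ E]
    {E' : Type*} [NormedAddCommGroup E'] [NormedSpace ℝ E']
    {H : Type*} [TopologicalSpace H] (I : ModelWithCorners ℝ E' H)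
    {M : Type*} [TopologicalSpace M] [ChartedSpace H M]
    (f : M → E) (hf : MDifferentiable I 𝓘(ℝ, E) f)
    (himm : ∀ p : M, Function.Injective (mfderiv I 𝓘(ℝ, E) f p))
    (W : AffineSubspace ℝ E) (hWne : (W : Set E).Nonempty)
    [CompleteSpace W.direction]
    (π : E → E) (hπmem : ∀ x : E, π x ∈ W)
    (hπorth : ∀ x : E, ∀ d ∈ W.direction, ⟪x - π x, d⟫ = 0)
    (hdisj : ∀ p : M, f p ∉ W)
    (hC : ∀ (q : M) (v : E),
      (∃ w : TangentSpace I q, (mfderiv I 𝓘(ℝ, E) f q w : E) = v) →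
      (∀ d ∈ W.direction, ⟪v, d⟫ = 0) →
      ∃ η : E, ⟪η, v⟫ = 0 ∧ ∃ t : ℝ, f q + t • η ∈ W)
    (T : Set ℝ) (hT : T.OrdConnected)
    (α : ℝ → M) (hα : MDifferentiableOn 𝓘(ℝ, ℝ) I α T)
    (hfiber : ∀ s ∈ T, ∀ t ∈ T, π (f (α s)) = π (f (α t))) :
    ∀ s ∈ T, ∀ t ∈ T, ‖f (α s) - π (f (α s))‖ = ‖f (α t) - π (f (α t))‖ :=
  stmt_9_general I f hf W π hπmem hπorth hC T hT α hα hfiber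
end

section
/- Let E be a real inner product space, let W ⊆ E be a nonempty affine subspace whose direction D is a complete subspace, and let φ : E → E be a surjective isometry fixing every point of W. Fix y ∈ W and r ≥ 0, and let S′(y, r) = {x ∈ E : x − y ⊥ D and ‖x − y‖ = r} be the sphere of radius r centered at y inside the affine subspace through y orthogonal to W. Then φ maps S′(y, r) onto S′(y, r). (This is Claim 2.8 ("Claim M") from the proof of Theorem 1.1 in the Euclidean case: the orbit spheres of the group G_W are invariant under every isometry fixing W pointwise.) -/
open scoped RealInnerProductSpace

/-- Claim 2.8 ("Claim M") from the proof of Theorem 1.1 of the paper, Euclidean case: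
a surjective isometry `φ` of `E` fixing the nonempty affine subspace `W` (with complete
direction `D`) pointwise maps the sphere `S′(y, r) = {x | x - y ⊥ D, ‖x - y‖ = r}`
(for `y ∈ W`, `r ≥ 0`) onto itself. -/
theorem stmt_11
    {E : Type*} [NormedAddCommGroup E] [InnerProductSpace ℝ E]
    (W : AffineSubspace ℝ E) (hWne : (W : Set E).Nonempty)
    [CompleteSpace W.direction]
    (φ : E → E) (hφ : Isometry φ) (hsurj : Function.Surjective φ)
    (hfix : ∀ w ∈ W, φ w = w)
    (y : E) (hy : y ∈ W) (r : ℝ) (hr : 0 ≤ r) :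
    φ '' {x : E | x - y ∈ W.directionᗮ ∧ ‖x - y‖ = r}
      = {x : E | x - y ∈ W.directionᗮ ∧ ‖x - y‖ = r} := by
  have hbij : Function.Bijective φ := ⟨hφ.injective, hsurj⟩
  let e : E ≃ᵢ E := ⟨Equiv.ofBijective φ hbij, hφ⟩
  have he : ∀ x, e x = φ x := fun _ => rfl
  let ψ : E ≃ᵢ E :=
    (IsometryEquiv.addRight y).trans (e.trans (IsometryEquiv.addRight (-y)))
  have hψ : ∀ x, ψ x = φ (x + y) + -y := fun _ => rfl
  have hψ0 : ψ 0 = 0 := by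
    simp [hψ, hfix y hy]
  let f : E ≃ₗᵢ[ℝ] E := ψ.toRealLinearIsometryEquivOfMapZero hψ0
  have hf : ∀ x, f x = φ (x + y) - y := by
    intro x
    show ψ x = _
    rw [hψ, sub_eq_add_neg]
  -- f fixes W.direction pointwise
  have hfD : ∀ d ∈ W.direction, f d = d := by
    intro d hd
    have hmem : d + y ∈ W := by
      have := AffineSubspace.vadd_mem_of_mem_direction hd hy
      simpa using this
    rw [hf, hfix _ hmem]; abel
  have hfsD : ∀ d ∈ W.direction, f.symm d = d := by
    intro d hd
    have := hfD d hd
    exact f.symm_apply_eq.mpr this.symm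
  -- f and f.symm preserve the orthogonal complement
  have hperp : ∀ v ∈ W.directionᗮ, f v ∈ W.directionᗮ := by
    intro v hv
    intro d hd
    have : ⟪d, f v⟫ = ⟪f.symm d, v⟫ := by
      conv_lhs => rw [← f.apply_symm_apply d]
      exact f.inner_map_map _ _
    rw [Submodule.mem_orthogonal] at hv
    rw [this, hfsD d hd]
    exact hv d hd
  have hperps : ∀ v ∈ W.directionᗮ, f.symm v ∈ W.directionᗮ := by
    intro v hv
    intro d hd
    have : ⟪d, f.symm v⟫ = ⟪f d, v⟫ := by
      conv_lhs => rw [← f.symm_apply_apply d]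
      exact f.symm.inner_map_map _ _
    rw [Submodule.mem_orthogonal] at hv
    rw [this, hfD d hd]
    exact hv d hd
  have key : ∀ x, φ x - y = f (x - y) := by
    intro x; rw [hf]; congr 2; abel
  apply Set.Subset.antisymm
  · rintro _ ⟨z, ⟨hz1, hz2⟩, rfl⟩
    refine ⟨?_, ?_⟩
    · rw [key]; exact hperp _ hz1
    · rw [key, f.norm_map]; exact hz2
  · rintro x ⟨hx1, hx2⟩
    refine ⟨e.symm x, ⟨?_, ?_⟩, e.apply_symm_apply x⟩
    · have h1 : e.symm x - y = f.symm (x - y) := by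
        apply f.injective
        rw [f.apply_symm_apply, ← key]
        have : φ (e.symm x) = x := e.apply_symm_apply x
        rw [this]
      rw [h1]; exact hperps _ hx1
    · have h1 : e.symm x - y = f.symm (x - y) := by
        apply f.injective
        rw [f.apply_symm_apply, ← key]
        have : φ (e.symm x) = x := e.apply_symm_apply x
        rw [this]
      rw [h1, f.symm.norm_map]; exact hx2
end
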